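/- For any T > 0 and any positive integer n, the Frobenius norm of the circulant matrix Â_{T,n} satisfies ‖Â_{T,n}‖_F²/T ≤ 2·(∫_ℝ |R(τ)| dτ)·(sup_{τ∈ℝ} |R(τ)|); in particular ‖Â_{T,n}‖_F²/T is bounded uniformly over all T > 0 and n ∈ ℕ. -/

import Mathlib

open MeasureTheory Filter Finset Real

/-- `γ_l = (n/T) ∫_{t_0}^{t_1} ∫_{t_l}^{t_{l+1}} R(v-u) dv du`, where `t_i = i T / n`. -/
noncomputable def gam (R : ℝ → ℝ) (T : ℝ) (n : ℕ) (l : ℤ) : ℝ :=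
  ((n : ℝ) / T) *
    ∫ u in (0:ℝ)..(T / n), ∫ v in ((l : ℝ) * T / n)..(((l : ℝ) + 1) * T / n), R (v - u)

/-- `γ̂_0 = γ_0` and `γ̂_k = γ_k + γ_{n-k}` for `1 ≤ k ≤ n-1`. -/
noncomputable def gamHat (R : ℝ → ℝ) (T : ℝ) (n : ℕ) (k : ℕ) : ℝ :=
  if k = 0 then gam R T n 0 else gam R T n k + gam R T n ((n : ℤ) - k)

/-- The `n × n` circulant matrix `Â_{T,n}` with `(i,j)`-entry `γ̂_{(j-i) mod n}`
(`j - i` is subtraction in `Fin n`, i.e. subtraction mod `n`). -/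
noncomputable def AHat (R : ℝ → ℝ) (T : ℝ) (n : ℕ) : Matrix (Fin n) (Fin n) ℝ :=
  fun i j => gamHat R T n ((j - i : Fin n) : ℕ)

/-!
Since `Â` is circulant, `‖Â‖_F² = n ∑_k γ̂_k²`, and `∑_k γ̂_k² ≤ (max_k |γ̂_k|) ∑_k |γ̂_k|`.
Bounding `R` by `M = sup |R|` on a cell of area `(T/n)²` gives `|γ_l| ≤ M T / n`, hence
`|γ̂_k| ≤ 2 M T / n`. By evenness `γ_{n-k} = γ_{k-n}`, so `∑_k |γ̂_k| ≤ ∑_{l=-n}^{n-1} |γ_l|`;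
after moving the absolute values inside the double integrals, the cells `[t_l, t_{l+1}]` tile
an interval, and the inner integrals add up to at most `∫ |R|`.
-/

theorem sum_sum_comp_sub {G M : Type*} [AddGroup G] [Fintype G] [AddCommMonoid M]
    (g : G → M) : ∑ i, ∑ j, g (j - i) = Fintype.card G • ∑ k, g k := by
  have hrow (i : G) : ∑ j, g (j - i) = ∑ k, g k := Equiv.sum_comp (Equiv.subRight i) g
  simp only [hrow, Finset.sum_const, Finset.card_univ]

theorem sum_sq_le_mul_sum_abs {ι : Type*} (s : Finset ι) (x : ι → ℝ) {B : ℝ}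
    (hB : ∀ i ∈ s, |x i| ≤ B) : ∑ i ∈ s, x i ^ 2 ≤ B * ∑ i ∈ s, |x i| := by
  rw [Finset.mul_sum]
  refine Finset.sum_le_sum fun i hi => ?_
  rw [← sq_abs, sq]
  exact mul_le_mul_of_nonneg_right (hB i hi) (abs_nonneg _)

section DoubleIntegral

variable {f : ℝ → ℝ}

theorem continuous_intervalIntegral_comp_sub (hf : Integrable f) (a b : ℝ) :
    Continuous fun u => ∫ v in a..b, f (v - u) := by
  have hI : ∀ x y, IntervalIntegrable f volume x y := fun _ _ => hf.intervalIntegrable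
  simp_rw [intervalIntegral.integral_comp_sub_right f,
    ← intervalIntegral.integral_interval_sub_left (hI 0 (b - _)) (hI 0 (a - _))]
  have hP := hf.continuous_primitive 0
  fun_prop

theorem intervalIntegral_abs_comp_sub_le (hf : Integrable f) {a b : ℝ} (hab : a ≤ b) (u : ℝ) :
    ∫ v in a..b, |f (v - u)| ≤ ∫ v, |f v| := by
  rw [intervalIntegral.integral_of_le hab, ← integral_sub_right_eq_self (fun v => |f v|) u]
  exact setIntegral_le_integral (hf.abs.comp_sub_right u) (.of_forall fun _ => abs_nonneg _)

theorem abs_integral_integral_comp_sub_le {M : ℝ} (hM : ∀ x, |f x| ≤ M) (a b c : ℝ) :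
    |∫ u in (0:ℝ)..c, ∫ v in a..b, f (v - u)| ≤ M * |b - a| * |c| := by
  have inner (u : ℝ) : ‖∫ v in a..b, f (v - u)‖ ≤ M * |b - a| :=
    intervalIntegral.norm_integral_le_of_norm_le_const fun v _ => hM (v - u)
  have outer := intervalIntegral.norm_integral_le_of_norm_le_const (a := 0) (b := c)
    fun u _ => inner u
  rwa [Real.norm_eq_abs, sub_zero] at outer

theorem sum_abs_integral_integral_comp_sub_le (hf : Integrable f) {a : ℕ → ℝ} (ha : Monotone a)
    {c : ℝ} (hc : 0 ≤ c) (m : ℕ) :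
    ∑ k ∈ range m, |∫ u in (0:ℝ)..c, ∫ v in a k..a (k + 1), f (v - u)| ≤ c * ∫ v, |f v| := by
  have hcont (g : ℝ → ℝ) (hg : Integrable g) (x y : ℝ) :
      IntervalIntegrable (fun u => ∫ v in x..y, g (v - u)) volume 0 c :=
    (continuous_intervalIntegral_comp_sub hg x y).intervalIntegrable _ _
  calc ∑ k ∈ range m, |∫ u in (0:ℝ)..c, ∫ v in a k..a (k + 1), f (v - u)|
      ≤ ∑ k ∈ range m, ∫ u in (0:ℝ)..c, ∫ v in a k..a (k + 1), |f (v - u)| := by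
        refine Finset.sum_le_sum fun k _ => ?_
        refine (intervalIntegral.abs_integral_le_integral_abs hc).trans ?_
        refine intervalIntegral.integral_mono_on hc (hcont f hf _ _).abs
          (hcont _ hf.abs _ _) fun u _ => ?_
        exact intervalIntegral.abs_integral_le_integral_abs (ha k.le_succ)
    _ = ∫ u in (0:ℝ)..c, ∫ v in a 0..a m, |f (v - u)| := by
        rw [← intervalIntegral.integral_finsetSum fun k _ => hcont _ hf.abs _ _]
        refine intervalIntegral.integral_congr fun u _ => ?_
        exact intervalIntegral.sum_integral_adjacent_intervals fun k _ =>
          (hf.abs.comp_sub_right u).intervalIntegrable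
    _ ≤ ∫ _ in (0:ℝ)..c, ∫ v, |f v| :=
        intervalIntegral.integral_mono_on hc (hcont _ hf.abs _ _) intervalIntegrable_const
          fun u _ => intervalIntegral_abs_comp_sub_le hf (ha (Nat.zero_le m)) u
    _ = c * ∫ v, |f v| := by simp

-- Substitute `u ↦ c - u`, `v ↦ c - v`; evenness absorbs the sign change of `v - u`.
theorem integral_integral_comp_sub_reflect (hf : Function.Even f) (a b c : ℝ) :
    ∫ u in (0:ℝ)..c, ∫ v in a..b, f (v - u) = ∫ u in (0:ℝ)..c, ∫ v in c - b..c - a, f (v - u) := by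
  have inner (u : ℝ) :
      ∫ v in a..b, f (v - u) = ∫ v in c - b..c - a, f (v - (c - u)) := by
    rw [← intervalIntegral.integral_comp_sub_left (fun v => f (v - (c - u)))]
    refine intervalIntegral.integral_congr fun v _ => ?_
    rw [← hf]
    ring_nf
  simp_rw [inner]
  rw [intervalIntegral.integral_comp_sub_left (fun u => ∫ v in c - b..c - a, f (v - u))]
  simp

end DoubleIntegral

section Gamma

variable {R : ℝ → ℝ} {T : ℝ} {n : ℕ}

theorem gam_eq (l : ℤ) :
    gam R T n l = (T / n)⁻¹ *
      ∫ u in (0:ℝ)..T / n, ∫ v in l * (T / n)..(l + 1) * (T / n), R (v - u) := by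
  simp only [gam, inv_div, mul_div_assoc]

theorem gam_neg (hR : Function.Even R) (l : ℤ) : gam R T n (-l) = gam R T n l := by
  rw [gam_eq, gam_eq, integral_integral_comp_sub_reflect hR]
  push_cast
  ring_nf

theorem abs_gam_le {M : ℝ} (hM : ∀ x, |R x| ≤ M) (hT : 0 < T) (hn : 0 < n) (l : ℤ) :
    |gam R T n l| ≤ M * (T / n) := by
  have hc : 0 < T / n := by positivity
  rw [gam_eq, abs_mul, abs_inv, abs_of_pos hc]
  calc (T / n)⁻¹ * |∫ u in (0:ℝ)..T / n, ∫ v in l * (T / n)..(l + 1) * (T / n), R (v - u)|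
      ≤ (T / n)⁻¹ * (M * |(l + 1) * (T / n) - l * (T / n)| * |T / n|) :=
        mul_le_mul_of_nonneg_left (abs_integral_integral_comp_sub_le hM _ _ _)
          (inv_nonneg.mpr hc.le)
    _ = M * (T / n) := by
        rw [show (l + 1) * (T / n) - l * (T / n) = T / n by ring, abs_of_pos hc]
        field_simp

theorem sum_abs_gam_le (hR : Integrable R) (hT : 0 < T) (hn : 0 < n) (l₀ : ℤ) (m : ℕ) :
    ∑ k ∈ range m, |gam R T n (l₀ + k)| ≤ ∫ x, |R x| := by
  have hc : 0 < T / n := by positivity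
  have ha : Monotone fun k : ℕ => (l₀ + k : ℝ) * (T / n) := fun i j hij => by
    dsimp only
    gcongr
  have key := sum_abs_integral_integral_comp_sub_le hR ha hc.le m
  push_cast [← add_assoc] at key
  simp only [gam_eq, abs_mul, abs_inv, abs_of_pos hc, ← Finset.mul_sum]
  push_cast
  calc (T / n)⁻¹ * ∑ k ∈ range m, _ ≤ (T / n)⁻¹ * (T / n * ∫ x, |R x|) :=
        mul_le_mul_of_nonneg_left key (inv_nonneg.mpr hc.le)
    _ = ∫ x, |R x| := inv_mul_cancel_left₀ hc.ne' _

theorem abs_gamHat_le (hR : Function.Even R) (k : ℕ) :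
    |gamHat R T n k| ≤ |gam R T n k| + |gam R T n (k - n)| := by
  unfold gamHat
  split_ifs with hk
  · subst hk
    simp
  · rw [← gam_neg hR (k - n), neg_sub]
    exact abs_add_le _ _

theorem sum_abs_gamHat_le (hR : Function.Even R) (hRi : Integrable R) (hT : 0 < T) (hn : 0 < n) :
    ∑ k : Fin n, |gamHat R T n k| ≤ ∫ x, |R x| :=
  calc ∑ k : Fin n, |gamHat R T n k|
      ≤ ∑ k ∈ range n, (|gam R T n (k - n)| + |gam R T n k|) := by
        rw [Fin.sum_univ_eq_sum_range (fun k => |gamHat R T n k|)]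
        exact Finset.sum_le_sum fun k _ => (abs_gamHat_le hR k).trans_eq (add_comm _ _)
    _ = ∑ k ∈ range (n + n), |gam R T n (-n + k)| := by
        rw [Finset.sum_range_add, Finset.sum_add_distrib]
        push_cast
        simp only [neg_add_eq_sub, add_sub_cancel_left]
    _ ≤ ∫ x, |R x| := sum_abs_gam_le hRi hT hn _ _

theorem abs_gamHat_le_two_mul {M : ℝ} (hR : Function.Even R) (hM : ∀ x, |R x| ≤ M)
    (hT : 0 < T) (hn : 0 < n) (k : ℕ) : |gamHat R T n k| ≤ 2 * (M * (T / n)) :=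
  calc |gamHat R T n k| ≤ |gam R T n k| + |gam R T n (k - n)| := abs_gamHat_le hR k
    _ ≤ M * (T / n) + M * (T / n) := add_le_add (abs_gam_le hM hT hn _) (abs_gam_le hM hT hn _)
    _ = 2 * (M * (T / n)) := by ring

end Gamma

theorem stmt_6_general (R : ℝ → ℝ) (hEven : ∀ τ, R (-τ) = R τ)
    (hBdd : ∃ M, ∀ τ, |R τ| ≤ M) (hInt : Integrable R)
    (T : ℝ) (hT : 0 < T) (n : ℕ) (hn : 0 < n) :
    (∑ i, ∑ j, (AHat R T n i j) ^ 2) / T ≤ 2 * (∫ τ, |R τ|) * (⨆ τ, |R τ|) := by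
  set M := ⨆ τ, |R τ|
  obtain ⟨M₀, hM₀⟩ := hBdd
  have hM : ∀ τ, |R τ| ≤ M := le_ciSup ⟨M₀, Set.forall_mem_range.mpr hM₀⟩
  have hMc (k : Fin n) := abs_gamHat_le_two_mul hEven hM hT hn k
  have hrow : ∑ k : Fin n, gamHat R T n k ^ 2 ≤ 2 * (M * (T / n)) * ∫ τ, |R τ| :=
    (sum_sq_le_mul_sum_abs univ _ fun k _ => hMc k).trans <|
      mul_le_mul_of_nonneg_left (sum_abs_gamHat_le hEven hInt hT hn)
        ((abs_nonneg _).trans (hMc ⟨0, hn⟩))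
  have : NeZero n := ⟨hn.ne'⟩
  have hfrob : ∑ i, ∑ j, AHat R T n i j ^ 2 = n * ∑ k : Fin n, gamHat R T n k ^ 2 := by
    simpa [AHat] using sum_sum_comp_sub fun k : Fin n => gamHat R T n k ^ 2
  calc (∑ i, ∑ j, AHat R T n i j ^ 2) / T
      ≤ n * (2 * (M * (T / n)) * ∫ τ, |R τ|) / T := by
        rw [hfrob]
        gcongr
    _ = 2 * (∫ τ, |R τ|) * M := by field_simp

theorem stmt_6 (R : ℝ → ℝ) (hEven : ∀ τ, R (-τ) = R τ) (hCont : Continuous R)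
    (hBdd : ∃ M, ∀ τ, |R τ| ≤ M) (hInt : Integrable R)
    (T : ℝ) (hT : 0 < T) (n : ℕ) (hn : 0 < n) :
    (∑ i, ∑ j, (AHat R T n i j) ^ 2) / T ≤ 2 * (∫ τ, |R τ|) * (⨆ τ, |R τ|) :=
  stmt_6_general R hEven hBdd hInt T hT n hn
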